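/- If X₁ ~ Bernoulli(p) with p ≠ 1/2 and X₂ ~ N(0, σ²) are independent with σ² ≥ p(1−p)/(π(1−2p)²), then X = X₁ + X₂ is reasonable with respect to cos. -/

import Mathlib

/-!
The supremum over phases `a` of `E cos (a + d X)` is `‖φ_X(d)‖`, and by independence
`‖φ_X(d)‖² = (1 - 2c(1 - cos d)) e^{-σ²d²}` with `c = p(1 - p)`. The derivative of the latter is
`-2 e^{-σ²d²} (c sin d + σ² d (1 - 2c(1 - cos d)))`, and the bracket is nonnegative for `d ≤ π`
since `sin d ≥ 0`, and for `d > π` because `1 - 2c(1 - cos d) ≥ 1 - 4c = (1 - 2p)²` while the hypothesis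
on `σ²` says exactly `π σ² (1 - 2p)² ≥ c`.
-/

open MeasureTheory ProbabilityTheory Set Complex
open scoped Real

theorem Complex.iSup_re_exp_mul_I_mul (z : ℂ) :
    ⨆ a : ℝ, (cexp (a * I) * z).re = ‖z‖ := by
  have hle : ∀ a : ℝ, (cexp (a * I) * z).re ≤ ‖z‖ := fun a =>
    (re_le_norm _).trans (by rw [norm_mul, norm_exp_ofReal_mul_I, one_mul])
  refine le_antisymm (ciSup_le hle) (le_ciSup_of_le ⟨‖z‖, forall_mem_range.2 hle⟩ (-z.arg) ?_)
  conv_rhs => rw [← norm_mul_exp_arg_mul_I z, mul_left_comm, ← exp_add]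
  simp

theorem integral_cos_add_mul_eq_re_charFun (μ : Measure ℝ) [IsFiniteMeasure μ] (a d : ℝ) :
    ∫ x, Real.cos (a + d * x) ∂μ = (cexp (a * I) * charFun μ d).re := by
  rw [charFun_apply_real, ← integral_const_mul, ← reCLM_apply,
    ← ContinuousLinearMap.integral_comp_comm]
  · congr 1 with x
    rw [← exp_add, reCLM_apply, ← exp_ofReal_mul_I_re]
    push_cast; ring_nf
  · exact (integrable_const (1 : ℝ)).mono' (by fun_prop) (ae_of_all _ fun x => by
      rw [← exp_add, ← add_mul]; exact_mod_cast (norm_exp_ofReal_mul_I _).le)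

theorem iSup_integral_cos_add_mul_eq_norm_charFun (μ : Measure ℝ) [IsFiniteMeasure μ] (d : ℝ) :
    ⨆ a : ℝ, ∫ x, Real.cos (a + d * x) ∂μ = ‖charFun μ d‖ := by
  simp only [integral_cos_add_mul_eq_re_charFun, iSup_re_exp_mul_I_mul]

theorem charFun_bernoulli {p : ℝ} (hp0 : 0 ≤ p) (hp1 : p ≤ 1) (t : ℝ) :
    charFun (ENNReal.ofReal p • Measure.dirac (1 : ℝ) +
      ENNReal.ofReal (1 - p) • Measure.dirac (0 : ℝ)) t = 1 - p + p * cexp (t * I) := by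
  rw [charFun_apply_real, integral_add_measure, integral_smul_measure, integral_smul_measure,
    integral_dirac, integral_dirac, ENNReal.toReal_ofReal hp0, ENNReal.toReal_ofReal (by linarith)]
  · simp [real_smul]; ring
  all_goals exact (integrable_dirac (by simp)).smul_measure ENNReal.ofReal_ne_top

theorem normSq_one_sub_add_mul_exp_mul_I (p t : ℝ) :
    normSq (1 - p + p * cexp (t * I)) = 1 - 2 * (p * (1 - p)) * (1 - Real.cos t) := by
  rw [exp_mul_I, ← ofReal_cos, ← ofReal_sin, show (1 - p + p * (Real.cos t + Real.sin t * I) : ℂ)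
    = ((1 - p + p * Real.cos t : ℝ) : ℂ) + ((p * Real.sin t : ℝ) : ℂ) * I by push_cast; ring,
    normSq_add_mul_I]
  linear_combination p ^ 2 * Real.sin_sq_add_cos_sq t

theorem norm_charFun_gaussianReal_zero (v : NNReal) (t : ℝ) :
    ‖charFun (gaussianReal 0 v) t‖ = Real.exp (-(v * t ^ 2 / 2)) := by
  rw [charFun_gaussianReal, norm_exp]
  congr 1
  simp [← ofReal_pow]

theorem mul_sin_add_mul_mul_nonneg {c v t : ℝ} (hc : 0 ≤ c) (hv : 0 ≤ v)
    (hcv : c ≤ π * v * (1 - 4 * c)) (ht : 0 ≤ t) :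
    0 ≤ c * Real.sin t + v * t * (1 - 2 * c * (1 - Real.cos t)) := by
  have hq : 1 - 4 * c ≤ 1 - 2 * c * (1 - Real.cos t) := by nlinarith [Real.neg_one_le_cos t]
  have h4c : 0 ≤ 1 - 4 * c := by nlinarith [mul_nonneg Real.pi_pos.le hv]
  rcases le_or_gt t π with htπ | hπt
  · have := Real.sin_nonneg_of_nonneg_of_le_pi ht htπ
    have : 0 ≤ v * t := mul_nonneg hv ht
    nlinarith
  · have : π * v * (1 - 4 * c) ≤ v * t * (1 - 2 * c * (1 - Real.cos t)) := by
      have : π * v ≤ v * t := by nlinarith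
      nlinarith [mul_le_mul this hq h4c (by positivity)]
    nlinarith [Real.neg_one_le_sin t]

theorem antitoneOn_one_sub_mul_one_sub_cos_mul_exp_neg_mul_sq {c v : ℝ} (hc : 0 ≤ c)
    (hv : 0 ≤ v) (hcv : c ≤ π * v * (1 - 4 * c)) :
    AntitoneOn (fun t => (1 - 2 * c * (1 - Real.cos t)) * Real.exp (-v * t ^ 2)) (Ici 0) := by
  have hderiv : ∀ t, HasDerivAt (fun t => (1 - 2 * c * (1 - Real.cos t)) * Real.exp (-v * t ^ 2))
      (-2 * Real.exp (-v * t ^ 2) * (c * Real.sin t + v * t * (1 - 2 * c * (1 - Real.cos t))))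
      t := by
    intro t
    refine ((((Real.hasDerivAt_cos t).const_sub 1).const_mul (2 * c) |>.const_sub 1).mul
      ((hasDerivAt_pow 2 t).const_mul (-v)).exp).congr_deriv ?_
    push_cast
    ring
  refine antitoneOn_of_deriv_nonpos (convex_Ici 0) (Continuous.continuousOn (by fun_prop))
    (fun t _ => (hderiv t).differentiableAt.differentiableWithinAt) fun t ht => ?_
  rw [interior_Ici] at ht
  rw [(hderiv t).deriv]
  have := mul_sin_add_mul_mul_nonneg hc hv hcv (le_of_lt ht)
  have := Real.exp_pos (-v * t ^ 2)
  nlinarith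

theorem stmt13_general {Ω : Type*} [MeasurableSpace Ω] (P : Measure Ω) [IsProbabilityMeasure P]
    (X₁ X₂ : Ω → ℝ) (hX₁ : Measurable X₁) (hX₂ : Measurable X₂)
    (hindep : IndepFun X₁ X₂ P)
    (p : ℝ) (hp0 : 0 ≤ p) (hp1 : p ≤ 1) (hphalf : p ≠ 1 / 2)
    (hBer : P.map X₁ = ENNReal.ofReal p • Measure.dirac (1 : ℝ) +
      ENNReal.ofReal (1 - p) • Measure.dirac (0 : ℝ))
    (σ : NNReal)
    (hσ2 : p * (1 - p) / (Real.pi * (1 - 2 * p) ^ 2) ≤ (σ : ℝ) ^ 2)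
    (hGauss : P.map X₂ = gaussianReal 0 (σ ^ 2))
    (X : Ω → ℝ) (hXdef : X = X₁ + X₂) :
    AntitoneOn (fun d : ℝ => ⨆ a : ℝ, ∫ ω, Real.cos (a + d * X ω) ∂P) (Ioi 0) := by
  have hc : 0 ≤ p * (1 - p) := mul_nonneg hp0 (by linarith)
  have hcσ : p * (1 - p) ≤ π * (σ : ℝ) ^ 2 * (1 - 4 * (p * (1 - p))) := by
    have h2p : 0 < (1 - 2 * p) ^ 2 := by
      have : 1 - 2 * p ≠ 0 := fun h => hphalf (by linarith)
      positivity
    rw [div_le_iff₀ (by positivity)] at hσ2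
    linarith
  have hnormSq : ∀ d, ‖charFun (P.map X) d‖ ^ 2
      = (1 - 2 * (p * (1 - p)) * (1 - Real.cos d)) * Real.exp (-(σ : ℝ) ^ 2 * d ^ 2) := by
    intro d
    rw [hXdef, hindep.charFun_map_add_eq_mul hX₁.aemeasurable hX₂.aemeasurable, Pi.mul_apply,
      norm_mul, mul_pow, hBer, hGauss, charFun_bernoulli hp0 hp1, ← normSq_eq_norm_sq,
      normSq_one_sub_add_mul_exp_mul_I, norm_charFun_gaussianReal_zero, ← Real.exp_nat_mul]
    push_cast
    ring_nf
  have hsup : ∀ d, ⨆ a : ℝ, ∫ ω, Real.cos (a + d * X ω) ∂P = ‖charFun (P.map X) d‖ := by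
    intro d
    have hX : Measurable X := hXdef ▸ hX₁.add hX₂
    rw [← iSup_integral_cos_add_mul_eq_norm_charFun]
    congr with a
    have hcos : Continuous fun x : ℝ => Real.cos (a + d * x) := by fun_prop
    exact (integral_map hX.aemeasurable hcos.aestronglyMeasurable).symm
  intro x hx y hy hxy
  simp only [hsup]
  rw [← pow_le_pow_iff_left₀ (norm_nonneg _) (norm_nonneg _) two_ne_zero, hnormSq, hnormSq]
  exact antitoneOn_one_sub_mul_one_sub_cos_mul_exp_neg_mul_sq hc (sq_nonneg _) hcσ
    (Ioi_subset_Ici_self hx) (Ioi_subset_Ici_self hy) hxy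

/-- If `X₁ ~ Bernoulli(p)` with `p ≠ 1/2` and `X₂ ~ N(0,σ²)` are independent
with `σ² ≥ p(1−p)/(π(1−2p)²)`, then `X = X₁ + X₂` is reasonable with respect to `cos`. -/
theorem stmt13 {Ω : Type*} [MeasurableSpace Ω] (P : Measure Ω) [IsProbabilityMeasure P]
    (X₁ X₂ : Ω → ℝ) (hX₁ : Measurable X₁) (hX₂ : Measurable X₂)
    (hindep : IndepFun X₁ X₂ P)
    (p : ℝ) (hp0 : 0 ≤ p) (hp1 : p ≤ 1) (hphalf : p ≠ 1 / 2)
    (hBer : P.map X₁ = ENNReal.ofReal p • Measure.dirac (1 : ℝ) +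
      ENNReal.ofReal (1 - p) • Measure.dirac (0 : ℝ))
    (σ : NNReal) (hσ : 0 < σ)
    (hσ2 : p * (1 - p) / (Real.pi * (1 - 2 * p) ^ 2) ≤ (σ : ℝ) ^ 2)
    (hGauss : P.map X₂ = gaussianReal 0 (σ ^ 2))
    (X : Ω → ℝ) (hXdef : X = X₁ + X₂) :
    AntitoneOn (fun d : ℝ => ⨆ a : ℝ, ∫ ω, Real.cos (a + d * X ω) ∂P) (Ioi 0) :=
  stmt13_general P X₁ X₂ hX₁ hX₂ hindep p hp0 hp1 hphalf hBer σ hσ2 hGauss X hXdef
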